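/- Let S ⊆ 𝒮 be nonempty and let ŷ ∈ S. Then the bound provided by the S-relaxation dominates the bound provided by the LP-relaxation with fixed scenario ŷ: z_R(ŷ) ≤ z̃_R(S). -/
import Mathlib


open Matrix

/-- A scenario: integer-valued vector, within bounds on universal indices `U`,
zero outside `U`. -/
def IsScenario {n : ℕ} (U : Set (Fin n)) (l u : Fin n → ℝ) (y : Fin n → ℝ) : Prop :=
  (∀ j, ∃ z : ℤ, y j = (z : ℝ)) ∧
  (∀ j ∈ U, l j ≤ y j ∧ y j ≤ u j) ∧
  (∀ j ∉ U, y j = 0)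

/-- A relaxed strategy on a scenario set `T`: copies universal variables,
respects bounds, and is causal on existential variables. -/
def IsRelaxedStrategy {n : ℕ} (U : Set (Fin n)) (l u : Fin n → ℝ)
    (T : Set (Fin n → ℝ)) (π : (Fin n → ℝ) → (Fin n → ℝ)) : Prop :=
  (∀ y ∈ T, ∀ j ∈ U, π y j = y j) ∧
  (∀ y ∈ T, ∀ j, l j ≤ π y j ∧ π y j ≤ u j) ∧
  (∀ y ∈ T, ∀ y' ∈ T, ∀ i, i ∉ U →
    (∀ j ∈ U, j < i → y j = y' j) → π y i = π y' i)

/-- An integral strategy on `T`: all outputs are integer-valued. -/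
def IsIntegralStrategy {n : ℕ} (T : Set (Fin n → ℝ))
    (π : (Fin n → ℝ) → (Fin n → ℝ)) : Prop :=
  ∀ y ∈ T, ∀ j, ∃ z : ℤ, π y j = (z : ℝ)

/-- A winning strategy on `T`: every play satisfies the existential constraints. -/
def IsWinningStrategy {n m : ℕ} (A : Matrix (Fin m) (Fin n) ℝ) (b : Fin m → ℝ)
    (T : Set (Fin n → ℝ)) (π : (Fin n → ℝ) → (Fin n → ℝ)) : Prop :=
  ∀ y ∈ T, A.mulVec (π y) ≤ b

/-- Feasible region of the LP-relaxation with fixed scenario `yhat`. -/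
def FeasRegion {n m : ℕ} (U : Set (Fin n)) (l u : Fin n → ℝ)
    (A : Matrix (Fin m) (Fin n) ℝ) (b : Fin m → ℝ) (yhat : Fin n → ℝ) :
    Set (Fin n → ℝ) :=
  {x | (∀ j, l j ≤ x j ∧ x j ≤ u j) ∧ (∀ j ∈ U, x j = yhat j) ∧ A.mulVec x ≤ b}

/-- The S-relaxation bound dominates the LP-relaxation bound with any fixed
scenario yhat ∈ S: z_R(yhat) ≤ z̃_R(S). -/
theorem zR_le_S_relaxation
    {n m : ℕ} (U : Set (Fin n)) (l u : Fin n → ℝ)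
    (hl : ∀ j, ∃ z : ℤ, l j = (z : ℝ)) (hu : ∀ j, ∃ z : ℤ, u j = (z : ℝ))
    (hlu : l ≤ u)
    (A : Matrix (Fin m) (Fin n) ℝ) (b : Fin m → ℝ) (c : Fin n → ℝ)
    (𝒮 : Set (Fin n → ℝ)) (h𝒮ne : 𝒮.Nonempty)
    (h𝒮 : ∀ y ∈ 𝒮, IsScenario U l u y)
    (S : Set (Fin n → ℝ)) (hS : S ⊆ 𝒮) (hSne : S.Nonempty)
    (yhat : Fin n → ℝ) (hyhat : yhat ∈ S) :
    (⨅ x ∈ FeasRegion U l u A b yhat, ((c ⬝ᵥ x : ℝ) : EReal)) ≤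
      ⨅ σ : {σ : (Fin n → ℝ) → (Fin n → ℝ) //
          IsRelaxedStrategy U l u S σ ∧ IsWinningStrategy A b S σ},
        ⨆ y ∈ S, ((c ⬝ᵥ σ.1 y : ℝ) : EReal) := by
  refine le_iInf fun σ => ?_
  obtain ⟨hrel, hwin⟩ := σ.2
  have hmem : σ.1 yhat ∈ FeasRegion U l u A b yhat :=
    ⟨hrel.2.1 yhat hyhat, fun j hj => hrel.1 yhat hyhat j hj, hwin yhat hyhat⟩
  calc (⨅ x ∈ FeasRegion U l u A b yhat, ((c ⬝ᵥ x : ℝ) : EReal))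
      ≤ ((c ⬝ᵥ σ.1 yhat : ℝ) : EReal) := iInf₂_le _ hmem
    _ ≤ ⨆ y ∈ S, ((c ⬝ᵥ σ.1 y : ℝ) : EReal) := le_iSup₂_of_le yhat hyhat le_rfl
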